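/- Let a nil₂-group G be presented by generators {x_i : i ∈ I} and relations {r_j : j ∈ J}, let A be an abelian group, (a_i) an I-tuple in A, and Φ : G^ab ⊗ G^ab → A a homomorphism. Then the unique quadratic map f : ⟨x_i⟩^nil → A with f(x_i) = a_i and cross-effect (x_i|x_{i'})_f = Φ(x̂_i ⊗ x̂_{i'}) factors through the quotient G if and only if f(r_j) = 0 for all j ∈ J. -/

import Mathlib

/-!
Since the cross-effect of `f` factors through `G^ab`, it vanishes as soon as one argument lies in the
normal subgroup `N` generated by the relators. Hence `f` is additive on `N`, `f (u * n) = f u + f n`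
for `n ∈ N`, and `f` is invariant under conjugation on `N`, because
`f (g n g⁻¹) - f n = f (g g⁻¹) = 0`. So `{n ∈ N | f n = 0}` is a normal subgroup; it contains the
relators exactly when it is all of `N`, which is exactly when `f` is constant on the cosets of `N`.
-/

open scoped TensorProduct

/-- The free nilpotent group of class two on a set `S`. -/
abbrev FreeNil2 (S : Type*) : Type _ :=
  FreeGroup S ⧸ (⊤ : Subgroup (FreeGroup S)).lowerCentralSeries 2

/-- The nil₂-group presented by generators `I` and relations `r : J → FreeNil2 I`. -/
abbrev PresNil2 {I J : Type*} (r : J → FreeNil2 I) : Type _ :=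
  FreeNil2 I ⧸ Subgroup.normalClosure (Set.range r)

/-- The class of `u ∈ ⟨I⟩ⁿⁱˡ` in the abelianization `G^ab` of the presented group `G`,
written additively. -/
def presAb {I J : Type*} (r : J → FreeNil2 I) (u : FreeNil2 I) :
    Additive (Abelianization (PresNil2 r)) :=
  Additive.ofMul (Abelianization.of (QuotientGroup.mk u))

section

variable {G A : Type*} [Group G] [AddCommGroup A]

/-- Abstracts a cross-effect `(u|v)_f = Φ(ū ⊗ v̄)` computed in `G ⧸ N`: of `Φ` only the vanishing
at `1` survives. -/
def CrossEffectFactors (N : Subgroup G) [N.Normal] (f : G → A) : Prop :=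
  ∃ B : G ⧸ N → G ⧸ N → A, (∀ q, B 1 q = 0) ∧ (∀ q, B q 1 = 0) ∧
    ∀ u v : G, f (u * v) = f u + f v + B u v

namespace CrossEffectFactors

variable {N : Subgroup G} [N.Normal] {f : G → A}

theorem map_one (hf : CrossEffectFactors N f) : f 1 = 0 := by
  obtain ⟨B, hB, -, hfB⟩ := hf
  simpa [hB] using hfB 1 1

theorem map_mul_of_mem_right (hf : CrossEffectFactors N f) (u : G) {n : G} (hn : n ∈ N) :
    f (u * n) = f u + f n := by
  obtain ⟨B, -, hB, hfB⟩ := hf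
  rw [hfB, (QuotientGroup.eq_one_iff n).mpr hn, hB, add_zero]

theorem map_mul_of_mem_left (hf : CrossEffectFactors N f) {n : G} (hn : n ∈ N) (u : G) :
    f (n * u) = f n + f u := by
  obtain ⟨B, hB, -, hfB⟩ := hf
  rw [hfB, (QuotientGroup.eq_one_iff n).mpr hn, hB, add_zero]

theorem map_conj_of_mem (hf : CrossEffectFactors N f) (g : G) {n : G} (hn : n ∈ N) :
    f (g * n * g⁻¹) = f n := by
  obtain ⟨B, -, -, hfB⟩ := id hf
  have hgn : ((g * n : G) : G ⧸ N) = g := by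
    rw [QuotientGroup.mk_mul, (QuotientGroup.eq_one_iff n).mpr hn, mul_one]
  have hgg : f g + f g⁻¹ + B g (g⁻¹ : G) = 0 := by
    rw [← hfB, mul_inv_cancel, hf.map_one]
  calc f (g * n * g⁻¹) = f n + (f g + f g⁻¹ + B g (g⁻¹ : G)) := by
        rw [hfB, hgn, hf.map_mul_of_mem_right g hn]; abel
    _ = f n := by rw [hgg, add_zero]

def zeroSubgroup (hf : CrossEffectFactors N f) : Subgroup G where
  carrier := {n | n ∈ N ∧ f n = 0}
  one_mem' := ⟨N.one_mem, hf.map_one⟩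
  mul_mem' := by
    rintro x y ⟨hx, hfx⟩ ⟨hy, hfy⟩
    exact ⟨N.mul_mem hx hy, by rw [hf.map_mul_of_mem_left hx, hfx, hfy, add_zero]⟩
  inv_mem' := by
    rintro x ⟨hx, hfx⟩
    refine ⟨N.inv_mem hx, ?_⟩
    simpa [hfx, hf.map_one] using (hf.map_mul_of_mem_left hx x⁻¹).symm

instance zeroSubgroup_normal (hf : CrossEffectFactors N f) : hf.zeroSubgroup.Normal where
  conj_mem n := fun ⟨hn, hfn⟩ g =>
    ⟨‹N.Normal›.conj_mem n hn g, by rw [hf.map_conj_of_mem g hn, hfn]⟩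

theorem map_eq_zero_of_mem {s : Set G} (hf : CrossEffectFactors (Subgroup.normalClosure s) f)
    (hs : ∀ x ∈ s, f x = 0) {n : G} (hn : n ∈ Subgroup.normalClosure s) : f n = 0 :=
  (Subgroup.normalClosure_le_normal (N := hf.zeroSubgroup)
    (fun x hx => ⟨Subgroup.subset_normalClosure hx, hs x hx⟩) hn).2

theorem exists_lift_iff {s : Set G} (hf : CrossEffectFactors (Subgroup.normalClosure s) f) :
    (∀ x ∈ s, f x = 0) ↔ ∃ g : G ⧸ Subgroup.normalClosure s → A, ∀ u : G, g u = f u := by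
  constructor
  · intro hs
    refine ⟨fun q => Quotient.liftOn' q f fun u v huv => ?_, fun u => rfl⟩
    have hn : u⁻¹ * v ∈ Subgroup.normalClosure s := QuotientGroup.leftRel_apply.mp huv
    rw [← mul_inv_cancel_left u v, hf.map_mul_of_mem_right u hn, hf.map_eq_zero_of_mem hs hn,
      add_zero]
  · rintro ⟨g, hg⟩ x hx
    have hx1 : (x : G ⧸ Subgroup.normalClosure s) = 1 :=
      (QuotientGroup.eq_one_iff x).mpr (Subgroup.subset_normalClosure hx)
    rw [← hg, hx1, ← QuotientGroup.mk_one, hg, hf.map_one]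

end CrossEffectFactors

end

theorem presentedNil2_quadratic_factors_general (I J : Type*) (r : J → FreeNil2 I)
    {A : Type*} [AddCommGroup A]
    (Φ : (Additive (Abelianization (PresNil2 r))) ⊗[ℤ]
          (Additive (Abelianization (PresNil2 r))) →ₗ[ℤ] A)
    (f : FreeNil2 I → A)
    (hquad : ∀ u v : FreeNil2 I,
      f (u * v) = f u + f v + Φ (presAb r u ⊗ₜ[ℤ] presAb r v)) :
    (∀ j : J, f (r j) = 0) ↔
      ∃ g : PresNil2 r → A, ∀ u : FreeNil2 I, g (QuotientGroup.mk u) = f u := by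
  have hf : CrossEffectFactors (Subgroup.normalClosure (Set.range r)) f :=
    ⟨fun q q' => Φ (Additive.ofMul (Abelianization.of q) ⊗ₜ Additive.ofMul (Abelianization.of q')),
      fun q => by simp, fun q => by simp, hquad⟩
  rw [← hf.exists_lift_iff, Set.forall_mem_range]

/-- Let the nil₂-group `G` be presented by generators `I` and relations `r_j`; let
`f : ⟨I⟩ⁿⁱˡ → A` be the unique quadratic map with `f(x_i) = a_i` and cross-effects
given by `Φ : G^ab ⊗ G^ab → A`.  Then `f` factors through `G` iff `f(r_j) = 0` for all `j`. -/
theorem presentedNil2_quadratic_factors (I J : Type*) (r : J → FreeNil2 I)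
    {A : Type*} [AddCommGroup A] (a : I → A)
    (Φ : (Additive (Abelianization (PresNil2 r))) ⊗[ℤ]
          (Additive (Abelianization (PresNil2 r))) →ₗ[ℤ] A)
    (f : FreeNil2 I → A)
    (hgen : ∀ i : I, f (QuotientGroup.mk (FreeGroup.of i)) = a i)
    (hquad : ∀ u v : FreeNil2 I,
      f (u * v) = f u + f v + Φ (presAb r u ⊗ₜ[ℤ] presAb r v)) :
    (∀ j : J, f (r j) = 0) ↔
      ∃ g : PresNil2 r → A, ∀ u : FreeNil2 I, g (QuotientGroup.mk u) = f u :=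
  presentedNil2_quadratic_factors_general I J r Φ f hquad
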